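/- arXiv:1401.3541 — 2 statements merged into one kernel-verified Lean document; each statement's English description precedes it below -/
import Mathlib

section
/- Let f : ℝⁿ → ℝᵐ be bounded. Then the Filippov regularization g is upper semi-continuous in the sense that its graph is closed: if (x_k) is a sequence in ℝⁿ converging to x, (y_k) is a sequence in ℝᵐ converging to y, and y_k ∈ g(x_k) for every k, then y ∈ g(x). -/
/-- The Filippov regularization of `f` at `x`:
`g(x) = ⋂_{γ>0} closedConvexHull (f '' B(x,γ))`. -/
noncomputable def filippov {n m : ℕ}
    (f : EuclideanSpace ℝ (Fin n) → EuclideanSpace ℝ (Fin m))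
    (x : EuclideanSpace ℝ (Fin n)) : Set (EuclideanSpace ℝ (Fin m)) :=
  ⋂ γ > (0 : ℝ), closedConvexHull ℝ (f '' Metric.ball x γ)

/-! Every ball around `x` contains a ball around each point close enough to `x`, so the sets
whose intersection defines `filippov f x` each eventually contain `filippov f x'` as `x' → x`;
being closed, they then contain every limit of points of `filippov f x'`. -/

theorem filippov_subset_closedConvexHull {n m : ℕ}
    (f : EuclideanSpace ℝ (Fin n) → EuclideanSpace ℝ (Fin m)) {x : EuclideanSpace ℝ (Fin n)}
    {γ : ℝ} (hγ : 0 < γ) : filippov f x ⊆ closedConvexHull ℝ (f '' Metric.ball x γ) :=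
  Set.iInter₂_subset γ hγ

theorem eventually_filippov_subset_closedConvexHull {n m : ℕ}
    (f : EuclideanSpace ℝ (Fin n) → EuclideanSpace ℝ (Fin m)) (x : EuclideanSpace ℝ (Fin n))
    {γ : ℝ} (hγ : 0 < γ) :
    ∀ᶠ x' in nhds x, filippov f x' ⊆ closedConvexHull ℝ (f '' Metric.ball x γ) := by
  filter_upwards [Metric.ball_mem_nhds x (half_pos hγ)] with x' hx'
  have hball : Metric.ball x' (γ / 2) ⊆ Metric.ball x γ :=
    Metric.ball_subset_ball' (by linarith [Metric.mem_ball.mp hx'])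
  exact (filippov_subset_closedConvexHull f (half_pos hγ)).trans
    ((closedConvexHull ℝ).monotone (Set.image_mono hball))

theorem filippov_upper_semicontinuous_general {n m : ℕ}
    (f : EuclideanSpace ℝ (Fin n) → EuclideanSpace ℝ (Fin m))
    (xk : ℕ → EuclideanSpace ℝ (Fin n)) (x : EuclideanSpace ℝ (Fin n))
    (yk : ℕ → EuclideanSpace ℝ (Fin m)) (y : EuclideanSpace ℝ (Fin m))
    (hx : Filter.Tendsto xk Filter.atTop (nhds x))
    (hy : Filter.Tendsto yk Filter.atTop (nhds y))
    (hmem : ∀ k, yk k ∈ filippov f (xk k)) :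
    y ∈ filippov f x := by
  refine Set.mem_iInter₂.mpr fun γ hγ => isClosed_closedConvexHull.mem_of_tendsto hy ?_
  filter_upwards [hx.eventually (eventually_filippov_subset_closedConvexHull f x hγ)]
    with k hk using hk (hmem k)

/-- If `f` is bounded, the Filippov regularization has a closed graph:
if `x_k → x`, `y_k → y` and `y_k ∈ g(x_k)` for all `k`, then `y ∈ g(x)`. -/
theorem filippov_upper_semicontinuous {n m : ℕ}
    (f : EuclideanSpace ℝ (Fin n) → EuclideanSpace ℝ (Fin m))
    (hf : ∃ M : ℝ, ∀ y, ‖f y‖ ≤ M)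
    (xk : ℕ → EuclideanSpace ℝ (Fin n)) (x : EuclideanSpace ℝ (Fin n))
    (yk : ℕ → EuclideanSpace ℝ (Fin m)) (y : EuclideanSpace ℝ (Fin m))
    (hx : Filter.Tendsto xk Filter.atTop (nhds x))
    (hy : Filter.Tendsto yk Filter.atTop (nhds y))
    (hmem : ∀ k, yk k ∈ filippov f (xk k)) :
    y ∈ filippov f x :=
  filippov_upper_semicontinuous_general f xk x yk y hx hy hmem
end

section
/- Let θ : ℝ → ℝ be monotone nondecreasing and L-Lipschitz (L > 0), let θ̄ ∈ ℝ, and suppose there exists x* with θ(x*) = θ̄. Let 0 < ε with ε·L ≤ 1 and define the iteration x_{n+1} = x_n + ε·(θ̄ − θ(x_n)) from an arbitrary x_0 ∈ ℝ. Then the sequence (x_n) converges to a limit ℓ ∈ ℝ satisfying θ(ℓ) = θ̄. -/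
/-! The step map `T y = y + ε (θ̄ - θ y)` is monotone as soon as `ε L ≤ 1`, and its fixed points are
exactly the roots of `θ = θ̄`. Monotonicity of `θ` makes `T` push every point towards a root `x*`
without overshooting it, so the orbit is monotone and bounded by `x*`, hence convergent; by continuity
of `T` its limit is a fixed point. -/

open Filter Function Topology

section FixedPointOrbit

variable {α : Type*} [ConditionallyCompleteLinearOrder α] [TopologicalSpace α] [OrderTopology α]
  {f : α → α} {p x : α}

theorem Monotone.exists_tendsto_iterate_of_le_map_of_le_fixedPt (hf : Monotone f)
    (hp : IsFixedPt f p) (hxp : x ≤ p) (hx : x ≤ f x) :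
    ∃ l, Tendsto (fun n => f^[n] x) atTop (𝓝 l) := by
  have hbdd : BddAbove (Set.range fun n => f^[n] x) := by
    refine ⟨p, ?_⟩
    rintro _ ⟨n, rfl⟩
    exact (hp.iterate n).eq ▸ hf.iterate n hxp
  exact ⟨_, tendsto_atTop_ciSup (hf.monotone_iterate_of_le_map hx) hbdd⟩

theorem Monotone.exists_tendsto_iterate_of_map_le_of_fixedPt_le (hf : Monotone f)
    (hp : IsFixedPt f p) (hpx : p ≤ x) (hx : f x ≤ x) :
    ∃ l, Tendsto (fun n => f^[n] x) atTop (𝓝 l) := by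
  have hbdd : BddBelow (Set.range fun n => f^[n] x) := by
    refine ⟨p, ?_⟩
    rintro _ ⟨n, rfl⟩
    exact (hp.iterate n).eq ▸ hf.iterate n hpx
  exact ⟨_, tendsto_atTop_ciInf (hf.antitone_iterate_of_map_le hx) hbdd⟩

end FixedPointOrbit

theorem eq_iterate_of_succ_eq {α : Type*} {f : α → α} {x : ℕ → α}
    (hx : ∀ n, x (n + 1) = f (x n)) : x = fun n => f^[n] (x 0) := by
  funext n
  induction n with
  | zero => rfl
  | succ n ih => rw [hx n, ih, iterate_succ_apply']

def constraintStep (θ : ℝ → ℝ) (θbar ε : ℝ) (y : ℝ) : ℝ := y + ε * (θbar - θ y)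

section ConstraintStep

variable {θ : ℝ → ℝ} {θbar ε : ℝ}

theorem isFixedPt_constraintStep_iff (hε : ε ≠ 0) {y : ℝ} :
    IsFixedPt (constraintStep θ θbar ε) y ↔ θ y = θbar := by
  simp [IsFixedPt, constraintStep, hε, sub_eq_zero, eq_comm]

theorem continuous_constraintStep {L : ℝ} (hlip : ∀ x y, |θ x - θ y| ≤ L * |x - y|) :
    Continuous (constraintStep θ θbar ε) :=
  continuous_id.add <| continuous_const.mul <| continuous_const.sub
    (LipschitzWith.of_dist_le' hlip).continuous

theorem monotone_constraintStep {L : ℝ} (hlip : ∀ x y, |θ x - θ y| ≤ L * |x - y|)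
    (hε : 0 ≤ ε) (hεL : ε * L ≤ 1) : Monotone (constraintStep θ θbar ε) := by
  intro a b hab
  have hθ : θ b - θ a ≤ L * (b - a) := by
    simpa [abs_of_nonneg (sub_nonneg.2 hab)] using (abs_le.1 (hlip b a)).2
  calc constraintStep θ θbar ε a
      = constraintStep θ θbar ε b - ((b - a) - ε * (θ b - θ a)) := by
        simp only [constraintStep]; ring
    _ ≤ constraintStep θ θbar ε b := by nlinarith [mul_le_mul_of_nonneg_left hθ hε]

theorem le_constraintStep_of_le_root (hθ : Monotone θ) (hε : 0 ≤ ε) {xs y : ℝ}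
    (hxs : θ xs = θbar) (hy : y ≤ xs) : y ≤ constraintStep θ θbar ε y := by
  have : θ y ≤ θbar := hxs ▸ hθ hy
  unfold constraintStep
  nlinarith

theorem constraintStep_le_of_root_le (hθ : Monotone θ) (hε : 0 ≤ ε) {xs y : ℝ}
    (hxs : θ xs = θbar) (hy : xs ≤ y) : constraintStep θ θbar ε y ≤ y := by
  have : θbar ≤ θ y := hxs ▸ hθ hy
  unfold constraintStep
  nlinarith

end ConstraintStep

theorem constraint_iteration_converges_general
    (θ : ℝ → ℝ) (hθmono : Monotone θ)
    (L : ℝ) (hlip : ∀ x y : ℝ, |θ x - θ y| ≤ L * |x - y|)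
    (θbar : ℝ) (hroot : ∃ xstar : ℝ, θ xstar = θbar)
    (ε : ℝ) (hε : 0 < ε) (hεL : ε * L ≤ 1)
    (x : ℕ → ℝ) (hiter : ∀ n, x (n + 1) = x n + ε * (θbar - θ (x n))) :
    ∃ l : ℝ, Filter.Tendsto x Filter.atTop (nhds l) ∧ θ l = θbar := by
  obtain ⟨xs, hxs⟩ := hroot
  set T := constraintStep θ θbar ε
  have hT : Monotone T := monotone_constraintStep hlip hε.le hεL
  have hfix : IsFixedPt T xs := (isFixedPt_constraintStep_iff hε.ne').2 hxs
  have horbit : x = fun n => T^[n] (x 0) := eq_iterate_of_succ_eq hiter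
  obtain ⟨l, hl⟩ : ∃ l, Tendsto x atTop (𝓝 l) := by
    rw [horbit]
    rcases le_total (x 0) xs with h0 | h0
    · exact hT.exists_tendsto_iterate_of_le_map_of_le_fixedPt hfix h0
        (le_constraintStep_of_le_root hθmono hε.le hxs h0)
    · exact hT.exists_tendsto_iterate_of_map_le_of_fixedPt_le hfix h0
        (constraintStep_le_of_root_le hθmono hε.le hxs h0)
  refine ⟨l, hl, (isFixedPt_constraintStep_iff hε.ne').1 ?_⟩
  exact isFixedPt_of_tendsto_iterate (horbit ▸ hl) (continuous_constraintStep hlip).continuousAt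

/-- Convergence of the scalar constraint-driven iteration
`x_{n+1} = x_n + ε·(θ̄ − θ(x_n))` for nondecreasing `L`-Lipschitz `θ` with a
root `θ(x*) = θ̄` and step size `ε·L ≤ 1`: the iterates converge to a limit
`ℓ` with `θ(ℓ) = θ̄`. -/
theorem constraint_iteration_converges
    (θ : ℝ → ℝ) (hθmono : Monotone θ)
    (L : ℝ) (hL : 0 < L) (hlip : ∀ x y : ℝ, |θ x - θ y| ≤ L * |x - y|)
    (θbar : ℝ) (hroot : ∃ xstar : ℝ, θ xstar = θbar)
    (ε : ℝ) (hε : 0 < ε) (hεL : ε * L ≤ 1)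
    (x : ℕ → ℝ) (hiter : ∀ n, x (n + 1) = x n + ε * (θbar - θ (x n))) :
    ∃ l : ℝ, Filter.Tendsto x Filter.atTop (nhds l) ∧ θ l = θbar :=
  constraint_iteration_converges_general θ hθmono L hlip θbar hroot ε hε hεL x hiter
end
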